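/- arXiv:1308.6292 — 2 statements merged into one kernel-verified Lean document; each statement's English description precedes it below -/
import Mathlib

section
/- If query answering is FO-rewritable for UCQs (ans(q,T,A) = ans(rew(q),∅,A) for all A), then it is FO-rewritable for all EQL-Lite(UCQ) queries: replacing each embedded UCQ atom [q] by [rew(q)] in an ECQ Q yields a query Q' with Ans(Q,T,A) = Ans(Q',∅,A) for every ABox A. -/
namespace Stmt16

/-- EQL-Lite(UCQ) queries (ECQs): embedded UCQ atoms [q], negation, conjunction,
and existential quantification (over the active domain). Free variables are named
by natural numbers. -/
inductive ECQ (UCQ : Type) where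
  | atom (q : UCQ)
  | neg (Q : ECQ UCQ)
  | and (Q1 Q2 : ECQ UCQ)
  | ex (x : ℕ) (Q : ECQ UCQ)

variable {UCQ ABox Const : Type}

/-- The answers to an ECQ over an ABox, composing the answers `base q A` of the
embedded UCQs by first-order constructs, with existential variables ranging over
the active domain `adom A`. Answers are variable assignments. -/
def evalECQ (base : UCQ → ABox → Set (ℕ → Const)) (adom : ABox → Set Const)
    (A : ABox) : ECQ UCQ → Set (ℕ → Const)
  | .atom q => base q A
  | .neg Q => (evalECQ base adom A Q)ᶜ
  | .and Q1 Q2 => evalECQ base adom A Q1 ∩ evalECQ base adom A Q2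
  | .ex x Q => {σ | ∃ c ∈ adom A, Function.update σ x c ∈ evalECQ base adom A Q}

/-- Atom-wise rewriting of an ECQ: replace each embedded UCQ q by rew(q). -/
def rewECQ (rew : UCQ → UCQ) : ECQ UCQ → ECQ UCQ
  | .atom q => .atom (rew q)
  | .neg Q => .neg (rewECQ rew Q)
  | .and Q1 Q2 => .and (rewECQ rew Q1) (rewECQ rew Q2)
  | .ex x Q => .ex x (rewECQ rew Q)

/-- if UCQ answering is FO-rewritable, i.e.,
ans(q, T, A) = ans(rew(q), ∅, A) for all ABoxes A (with `ansT` the certain answers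
under the TBox T and `ans0` the answers under the empty TBox), then replacing each
embedded UCQ atom [q] of an ECQ Q by [rew(q)] yields Q' with
Ans(Q, T, A) = Ans(Q', ∅, A) for every ABox A. -/
theorem ecq_fo_rewritable
    (ansT ans0 : UCQ → ABox → Set (ℕ → Const)) (adom : ABox → Set Const)
    (rew : UCQ → UCQ)
    (hrew : ∀ q A, ansT q A = ans0 (rew q) A) :
    ∀ (Q : ECQ UCQ) (A : ABox),
      evalECQ ansT adom A Q = evalECQ ans0 adom A (rewECQ rew Q) := by
  intro Q A
  induction Q with
  | atom q => exact hrew q A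
  | neg Q ih => simp [evalECQ, rewECQ, ih]
  | and Q1 Q2 ih1 ih2 => simp [evalECQ, rewECQ, ih1, ih2]
  | ex x Q ih => simp [evalECQ, rewECQ, ih]

end Stmt16
end

section
/- The certain answers of a UCQ over a virtual ABox are invariant under renaming of database values by an injection that is extended homomorphically to object terms: if h : V → V is injective and I' = h(I), then σ ∈ ans(q, T, M(I)) iff h(σ) ∈ ans(q, T, M(I')), provided the source queries of M are generic (commute with h) and q mentions no constants. -/
namespace Stmt19

/-- Constants: values in V, or object terms f(d1,...,dn) built from function
symbols in F applied to values. -/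
inductive Term (V F : Type) where
  | val (v : V)
  | obj (f : F) (args : List V)

/-- Homomorphic extension of a renaming of values to terms:
h(f(d1,...,dn)) = f(h d1,...,h dn). -/
def mapTerm {V F : Type} (h : V → V) : Term V F → Term V F
  | .val v => .val (h v)
  | .obj f args => .obj f (args.map h)

/-- ABox atoms over concept names CN and role names RN. -/
inductive Atom (CN RN V F : Type) where
  | cfact (N : CN) (t : Term V F)
  | rfact (P : RN) (t1 t2 : Term V F)

def mapAtom {CN RN V F : Type} (h : V → V) : Atom CN RN V F → Atom CN RN V F
  | .cfact N t => .cfact N (mapTerm h t)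
  | .rfact P t1 t2 => .rfact P (mapTerm h t1) (mapTerm h t2)

def atomTerms {CN RN V F : Type} : Atom CN RN V F → Set (Term V F)
  | .cfact _ t => {t}
  | .rfact _ t1 t2 => {t1, t2}

/-- Active domain of an ABox. -/
def adom {CN RN V F : Type} (A : Set (Atom CN RN V F)) : Set (Term V F) :=
  ⋃ a ∈ A, atomTerms a

/-- DL-Lite_R roles, basic concepts, concepts and TBox assertions. -/
inductive Role (RN : Type) where
  | name (P : RN)
  | inv (P : RN)

inductive Basic (CN RN : Type) where
  | name (N : CN)
  | some (U : Role RN)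

inductive Concept (CN RN : Type) where
  | basic (B : Basic CN RN)
  | someQual (U : Role RN) (B : Basic CN RN)

inductive Assertion (CN RN : Type) where
  | inclC (B : Basic CN RN) (C : Concept CN RN)
  | inclR (U1 U2 : Role RN)
  | disjC (B1 B2 : Basic CN RN)
  | disjR (U1 U2 : Role RN)

/-- First-order interpretations, interpreting also all constants (terms). -/
structure Interp (CN RN V F : Type) where
  Δ : Type
  nonempty : Nonempty Δ
  cI : CN → Set Δ
  rI : RN → Set (Δ × Δ)
  tI : Term V F → Δ

variable {CN RN V F RS : Type}

def Interp.roleSem (I : Interp CN RN V F) : Role RN → Set (I.Δ × I.Δ)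
  | .name P => I.rI P
  | .inv P => {p | (p.2, p.1) ∈ I.rI P}

def Interp.basicSem (I : Interp CN RN V F) : Basic CN RN → Set I.Δ
  | .name N => I.cI N
  | .some U => {d | ∃ e, (d, e) ∈ I.roleSem U}

def Interp.conceptSem (I : Interp CN RN V F) : Concept CN RN → Set I.Δ
  | .basic B => I.basicSem B
  | .someQual U B => {d | ∃ e, (d, e) ∈ I.roleSem U ∧ e ∈ I.basicSem B}

def Interp.satAssertion (I : Interp CN RN V F) : Assertion CN RN → Prop
  | .inclC B C => I.basicSem B ⊆ I.conceptSem C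
  | .inclR U1 U2 => I.roleSem U1 ⊆ I.roleSem U2
  | .disjC B1 B2 => I.basicSem B1 ∩ I.basicSem B2 = ∅
  | .disjR U1 U2 => I.roleSem U1 ∩ I.roleSem U2 = ∅

def Interp.satAtom (I : Interp CN RN V F) : Atom CN RN V F → Prop
  | .cfact N t => I.tI t ∈ I.cI N
  | .rfact P t1 t2 => (I.tI t1, I.tI t2) ∈ I.rI P

/-- I is a model of the KB (T, A). -/
def ModelOf (I : Interp CN RN V F) (T : Set (Assertion CN RN))
    (A : Set (Atom CN RN V F)) : Prop :=
  (∀ a ∈ T, I.satAssertion a) ∧ (∀ a ∈ A, I.satAtom a)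

/-- UCQ query atoms mentioning only variables (no constants). -/
inductive QAtom (CN RN : Type) where
  | qc (N : CN) (x : ℕ)
  | qr (P : RN) (x y : ℕ)

/-- A constant-free UCQ: free variables plus a disjunction of conjunctions
of atoms. -/
structure UCQ (CN RN : Type) where
  frees : Set ℕ
  disjuncts : List (List (QAtom CN RN))

def satQAtom (I : Interp CN RN V F) (η : ℕ → I.Δ) : QAtom CN RN → Prop
  | .qc N x => η x ∈ I.cI N
  | .qr P x y => (η x, η y) ∈ I.rI P

/-- Evaluation of a UCQ on a single interpretation under a substitution σ of its
free variables by constants (terms). -/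
def holdsOn (I : Interp CN RN V F) (q : UCQ CN RN) (σ : ℕ → Term V F) : Prop :=
  ∃ d ∈ q.disjuncts, ∃ η : ℕ → I.Δ,
    (∀ x ∈ q.frees, η x = I.tI (σ x)) ∧ ∀ at' ∈ d, satQAtom I η at'

/-- Certain answers: substitutions into adom(A) making q hold in every model. -/
def certAns (q : UCQ CN RN) (T : Set (Assertion CN RN))
    (A : Set (Atom CN RN V F)) : Set (ℕ → Term V F) :=
  {σ | (∀ x ∈ q.frees, σ x ∈ adom A) ∧
    ∀ I : Interp CN RN V F, ModelOf I T A → holdsOn I q σ}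

/-- Virtual ABox of a mapping (set of pairs of source and target queries). -/
def virtualABox
    (M : Set ((Set (RS × List V) → Set (List V)) × (List V → Set (Atom CN RN V F))))
    (I : Set (RS × List V)) : Set (Atom CN RN V F) :=
  ⋃ m ∈ M, ⋃ v ∈ m.1 I, m.2 v

/-- Renaming of a database instance. -/
def mapDB (h : V → V) (I : Set (RS × List V)) : Set (RS × List V) :=
  (fun rf => (rf.1, rf.2.map h)) '' I

lemma mapTerm_injective {V F : Type} {h : V → V} (hinj : Function.Injective h) :
    Function.Injective (mapTerm (F := F) h) := by
  intro a b hab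
  cases a <;> cases b <;> simp [mapTerm] at hab ⊢
  · exact hinj hab
  · exact ⟨hab.1, List.map_injective_iff.mpr hinj hab.2⟩

lemma atomTerms_mapAtom {CN RN V F : Type} (h : V → V) (a : Atom CN RN V F) :
    atomTerms (mapAtom h a) = mapTerm h '' atomTerms a := by
  cases a <;> simp [atomTerms, mapAtom, Set.image_insert_eq]

lemma adom_image {CN RN V F : Type} (h : V → V) (A : Set (Atom CN RN V F)) :
    adom (mapAtom h '' A) = mapTerm h '' adom A := by
  simp only [adom, Set.biUnion_image, atomTerms_mapAtom, ← Set.image_iUnion₂]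

lemma virtualABox_mapDB {CN RN V F RS : Type} (h : V → V)
    (M : Set ((Set (RS × List V) → Set (List V)) × (List V → Set (Atom CN RN V F))))
    (hgeneric : ∀ m ∈ M, ∀ I : Set (RS × List V),
      m.1 (mapDB h I) = (List.map h) '' m.1 I)
    (htarget : ∀ m ∈ M, ∀ v : List V, m.2 (v.map h) = mapAtom h '' m.2 v)
    (I : Set (RS × List V)) :
    virtualABox M (mapDB h I) = mapAtom h '' virtualABox M I := by
  unfold virtualABox
  rw [Set.image_iUnion₂]
  apply Set.iUnion₂_congr
  intro m hm
  rw [hgeneric m hm, Set.biUnion_image, Set.image_iUnion₂]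
  apply Set.iUnion₂_congr
  intro v _
  exact htarget m hm v

/-- Pull back an interpretation along the term renaming. -/
def pullInterp {CN RN V F : Type} (h : V → V) (I : Interp CN RN V F) :
    Interp CN RN V F :=
  { Δ := I.Δ, nonempty := I.nonempty, cI := I.cI, rI := I.rI,
    tI := fun t => I.tI (mapTerm h t) }

lemma certAns_image {CN RN V F : Type} {h : V → V} (hinj : Function.Injective h)
    (q : UCQ CN RN) (T : Set (Assertion CN RN)) (A : Set (Atom CN RN V F))
    (σ : ℕ → Term V F) :
    σ ∈ certAns q T A ↔
      (fun x => mapTerm h (σ x)) ∈ certAns q T (mapAtom h '' A) := by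
  have hti := mapTerm_injective (F := F) hinj
  constructor
  · rintro ⟨hdom, hmod⟩
    constructor
    · intro x hx
      rw [adom_image]
      exact ⟨σ x, hdom x hx, rfl⟩
    · intro J hJ
      -- pull back J
      have hJ' : ModelOf (pullInterp h J) T A := by
        refine ⟨hJ.1, ?_⟩
        intro a ha
        have := hJ.2 (mapAtom h a) ⟨a, ha, rfl⟩
        cases a <;> exact this
      obtain ⟨d, hd, η, hη1, hη2⟩ := hmod (pullInterp h J) hJ'
      exact ⟨d, hd, η, hη1, hη2⟩
  · rintro ⟨hdom, hmod⟩
    constructor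
    · intro x hx
      have := hdom x hx
      rw [adom_image] at this
      obtain ⟨t, ht, hteq⟩ := this
      rwa [← hti hteq]
    · intro J hJ
      -- push forward J using a partial inverse of mapTerm h
      haveI : Nonempty (Term V F) := ⟨σ 0⟩
      set g := Function.invFun (mapTerm (F := F) h) with hg
      have hgi : ∀ t : Term V F, g (mapTerm h t) = t := fun t =>
        Function.leftInverse_invFun hti t
      set K : Interp CN RN V F :=
        { Δ := J.Δ, nonempty := J.nonempty, cI := J.cI, rI := J.rI,
          tI := fun t => J.tI (g t) } with hK
      have hKmod : ModelOf K T (mapAtom h '' A) := by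
        refine ⟨hJ.1, ?_⟩
        rintro _ ⟨a, ha, rfl⟩
        have := hJ.2 a ha
        cases a with
        | cfact N t =>
            show K.tI (mapTerm h t) ∈ K.cI N
            rw [hK]; simpa [hgi, Interp.satAtom] using this
        | rfact P t1 t2 =>
            show (K.tI (mapTerm h t1), K.tI (mapTerm h t2)) ∈ K.rI P
            rw [hK]; simpa [hgi, Interp.satAtom] using this
      obtain ⟨d, hd, η, hη1, hη2⟩ := hmod K hKmod
      refine ⟨d, hd, η, ?_, hη2⟩
      intro x hx
      have := hη1 x hx
      exact this.trans (congrArg J.tI (hgi (σ x)))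

/-- certain answers of a constant-free UCQ over a virtual ABox are
invariant under injective renaming of database values extended homomorphically to
object terms: if h : V → V is injective, the source queries of M are generic
(commute with h) and the target queries commute with h, then for I' = h(I),
σ ∈ ans(q, T, M(I)) iff h∘σ ∈ ans(q, T, M(I')). -/
theorem certain_answers_generic
    (h : V → V) (hinj : Function.Injective h)
    (M : Set ((Set (RS × List V) → Set (List V)) × (List V → Set (Atom CN RN V F))))
    (hgeneric : ∀ m ∈ M, ∀ I : Set (RS × List V),
      m.1 (mapDB h I) = (List.map h) '' m.1 I)
    (htarget : ∀ m ∈ M, ∀ v : List V, m.2 (v.map h) = mapAtom h '' m.2 v)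
    (q : UCQ CN RN) (T : Set (Assertion CN RN))
    (I : Set (RS × List V)) (σ : ℕ → Term V F) :
    σ ∈ certAns q T (virtualABox M I) ↔
      (fun x => mapTerm h (σ x)) ∈ certAns q T (virtualABox M (mapDB h I)) := by
  rw [virtualABox_mapDB h M hgeneric htarget I]
  exact certAns_image hinj q T _ σ

end Stmt19
end
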